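/- Let ε > 0, let C be a nonempty finite index set of cells, and for each c ∈ C let a_c, b_c ≥ 0 be reals and let (Z₁^c, Z₂^c)_{c ∈ C} be a family of mutually independent Laplace(0, 1/ε) random variables on a probability space. Then E[ Σ_{c ∈ C} ( b_c·1{a_c + Z₁^c ≥ b_c + Z₂^c} + a_c·1{a_c + Z₁^c < b_c + Z₂^c} ) ] = Σ_{c ∈ C} [ min(a_c, b_c)·(1 − g_ε(x_c)) + max(a_c, b_c)·g_ε(x_c) ], where x_c = |a_c − b_c| and g_ε(x) = (exp(−ε·x)/2)·(1 + ε·x/2). -/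

import Mathlib

/-!
The cells decouple by linearity of expectation. In one cell the number of misclassified records
is `a + (b - a) · 1{X - Y ≥ b - a}` with `X, Y` independent Laplace variables, so everything
reduces to the tail of `X - Y`: for `t ≥ 0`, `P(X - Y ≥ t) = ∫ F(x - t) f(x) dx = g_ε(t)`
(with `f`, `F` the Laplace density and distribution function), computed by splitting the line
at `0` and `t`. Since the Laplace law has no atoms, `P(X - Y > t) = g_ε(t)` as well, which
handles the case `a > b` after exchanging `X` and `Y`.
-/

open MeasureTheory Real ProbabilityTheory Set

noncomputable section

def laplacePDF (ε x : ℝ) : ℝ := ε / 2 * exp (-ε * |x|)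

def laplaceMeasure (ε : ℝ) : Measure ℝ :=
  volume.withDensity fun x => ENNReal.ofReal (laplacePDF ε x)

def laplaceCDF (ε x : ℝ) : ℝ := if x ≤ 0 then exp (ε * x) / 2 else 1 - exp (-ε * x) / 2

/-- The function `g_ε` of the paper: for `x ≥ 0` it is `P(Z₁ - Z₂ ≥ x)`. -/
def laplaceDiffTail (ε x : ℝ) : ℝ := exp (-ε * x) / 2 * (1 + ε * x / 2)

def cellMisclassification (a b x y : ℝ) : ℝ :=
  b * (if a + x ≥ b + y then 1 else 0) + a * (if a + x < b + y then 1 else 0)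

variable {ε : ℝ}

lemma laplacePDF_nonneg (hε : 0 ≤ ε) (x : ℝ) : 0 ≤ laplacePDF ε x := by
  unfold laplacePDF; positivity

lemma measurable_laplacePDF : Measurable (laplacePDF ε) := by
  unfold laplacePDF; fun_prop

lemma laplacePDF_of_nonpos {x : ℝ} (hx : x ≤ 0) : laplacePDF ε x = ε / 2 * exp (ε * x) := by
  rw [laplacePDF, abs_of_nonpos hx, neg_mul_neg]

lemma laplacePDF_of_nonneg {x : ℝ} (hx : 0 ≤ x) : laplacePDF ε x = ε / 2 * exp (-ε * x) := by
  rw [laplacePDF, abs_of_nonneg hx]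

lemma integrable_laplacePDF (hε : 0 < ε) : Integrable (laplacePDF ε) := by
  rw [← integrableOn_univ, ← Iic_union_Ioi (a := 0)]
  refine IntegrableOn.union ?_ ?_
  · exact IntegrableOn.congr_fun ((integrableOn_exp_mul_Iic hε 0).const_mul (ε / 2))
      (fun x hx => (laplacePDF_of_nonpos hx).symm) measurableSet_Iic
  · exact IntegrableOn.congr_fun ((integrableOn_exp_mul_Ioi (neg_lt_zero.2 hε) 0).const_mul _)
      (fun x hx => (laplacePDF_of_nonneg (le_of_lt hx)).symm) measurableSet_Ioi

lemma integral_laplacePDF_Iic (hε : 0 < ε) {s : ℝ} (hs : s ≤ 0) :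
    ∫ x in Iic s, laplacePDF ε x = exp (ε * s) / 2 := by
  rw [setIntegral_congr_fun measurableSet_Iic fun x hx => laplacePDF_of_nonpos (le_trans hx hs),
    integral_const_mul, integral_exp_mul_Iic hε]
  field_simp

lemma integral_laplacePDF_Ioi (hε : 0 < ε) {s : ℝ} (hs : 0 ≤ s) :
    ∫ x in Ioi s, laplacePDF ε x = exp (-ε * s) / 2 := by
  rw [setIntegral_congr_fun measurableSet_Ioi fun x hx => laplacePDF_of_nonneg (hs.trans hx.le),
    integral_const_mul, integral_exp_mul_Ioi (neg_lt_zero.2 hε)]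
  field_simp

lemma laplaceMeasure_apply (hε : 0 < ε) {s : Set ℝ} (hs : MeasurableSet s) :
    laplaceMeasure ε s = ENNReal.ofReal (∫ x in s, laplacePDF ε x) := by
  rw [laplaceMeasure, withDensity_apply _ hs, ofReal_integral_eq_lintegral_ofReal
    (integrable_laplacePDF hε).integrableOn (ae_of_all _ (laplacePDF_nonneg hε.le))]

lemma isProbabilityMeasure_laplaceMeasure (hε : 0 < ε) :
    IsProbabilityMeasure (laplaceMeasure ε) := by
  constructor
  rw [← Iic_union_Ioi (a := 0), measure_union (Iic_disjoint_Ioi le_rfl) measurableSet_Ioi,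
    laplaceMeasure_apply hε measurableSet_Iic, laplaceMeasure_apply hε measurableSet_Ioi,
    integral_laplacePDF_Iic hε le_rfl, integral_laplacePDF_Ioi hε le_rfl,
    ← ENNReal.ofReal_add (by positivity) (by positivity)]
  norm_num

lemma laplaceMeasure_Iic (hε : 0 < ε) (s : ℝ) :
    laplaceMeasure ε (Iic s) = ENNReal.ofReal (laplaceCDF ε s) := by
  by_cases hs : s ≤ 0
  · rw [laplaceCDF, if_pos hs, laplaceMeasure_apply hε measurableSet_Iic,
      integral_laplacePDF_Iic hε hs]
  · have := isProbabilityMeasure_laplaceMeasure hε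
    rw [laplaceCDF, if_neg hs, ← compl_Ioi, prob_compl_eq_one_sub measurableSet_Ioi,
      laplaceMeasure_apply hε measurableSet_Ioi, integral_laplacePDF_Ioi hε (le_of_not_ge hs),
      ← ENNReal.ofReal_one, ← ENNReal.ofReal_sub _ (by positivity)]

lemma laplaceDiffTail_nonneg (hε : 0 ≤ ε) {x : ℝ} (hx : 0 ≤ x) : 0 ≤ laplaceDiffTail ε x := by
  unfold laplaceDiffTail; positivity

lemma laplaceMeasure_singleton (x : ℝ) : laplaceMeasure ε {x} = 0 :=
  withDensity_absolutelyContinuous _ _ (measure_singleton x)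

lemma measurable_laplaceCDF : Measurable (laplaceCDF ε) :=
  Measurable.ite measurableSet_Iic (by fun_prop) (by fun_prop)

lemma laplaceCDF_mem_Icc (hε : 0 < ε) (x : ℝ) : laplaceCDF ε x ∈ Icc 0 1 := by
  unfold laplaceCDF
  split_ifs with hx
  · have : exp (ε * x) ≤ 1 := exp_le_one_iff.2 (mul_nonpos_of_nonneg_of_nonpos hε.le hx)
    constructor <;> linarith [exp_pos (ε * x)]
  · have : exp (-ε * x) ≤ 1 := exp_le_one_iff.2 (by nlinarith)
    constructor <;> linarith [exp_pos (-ε * x)]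

lemma integrable_laplaceCDF_mul_laplacePDF (hε : 0 < ε) (t : ℝ) :
    Integrable fun x => laplaceCDF ε (x - t) * laplacePDF ε x :=
  (integrable_laplacePDF hε).bdd_mul
    (measurable_laplaceCDF.comp (measurable_sub_const t)).aestronglyMeasurable
    (ae_of_all _ fun x => by
      rw [norm_of_nonneg (laplaceCDF_mem_Icc hε _).1]; exact (laplaceCDF_mem_Icc hε _).2)

lemma integral_Iic_zero_laplaceCDF_sub_mul_laplacePDF (hε : 0 < ε) {t : ℝ} (ht : 0 ≤ t) :
    ∫ x in Iic 0, laplaceCDF ε (x - t) * laplacePDF ε x = exp (-ε * t) / 8 := by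
  have hcongr : EqOn (fun x => laplaceCDF ε (x - t) * laplacePDF ε x)
      (fun x => ε / 4 * exp (-ε * t) * exp (2 * ε * x)) (Iic 0) := fun x (hx : x ≤ 0) => by
    dsimp only
    rw [laplaceCDF, if_pos (by linarith), laplacePDF_of_nonpos hx,
      show ε * (x - t) = -ε * t + ε * x by ring, show 2 * ε * x = ε * x + ε * x by ring,
      exp_add, exp_add]
    ring
  rw [setIntegral_congr_fun measurableSet_Iic hcongr, integral_const_mul,
    integral_exp_mul_Iic (by positivity), mul_zero, exp_zero]
  field_simp
  norm_num

lemma integral_Ioc_laplaceCDF_sub_mul_laplacePDF {t : ℝ} (ht : 0 ≤ t) :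
    ∫ x in Ioc 0 t, laplaceCDF ε (x - t) * laplacePDF ε x = ε / 4 * exp (-ε * t) * t := by
  have hcongr : EqOn (fun x => laplaceCDF ε (x - t) * laplacePDF ε x)
      (fun _ => ε / 4 * exp (-ε * t)) (Ioc 0 t) := fun x hx => by
    dsimp only
    rw [laplaceCDF, if_pos (by linarith [hx.2]), laplacePDF_of_nonneg hx.1.le,
      show -ε * t = ε * (x - t) + -ε * x by ring, exp_add]
    ring
  rw [setIntegral_congr_fun measurableSet_Ioc hcongr, setIntegral_const, measureReal_def,
    Real.volume_Ioc, ENNReal.toReal_ofReal (by linarith), smul_eq_mul, sub_zero, mul_comm]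

lemma integral_Ioi_laplaceCDF_sub_mul_laplacePDF (hε : 0 < ε) {t : ℝ} (ht : 0 ≤ t) :
    ∫ x in Ioi t, laplaceCDF ε (x - t) * laplacePDF ε x = 3 / 8 * exp (-ε * t) := by
  have hcancel : exp (ε * t) * exp (-ε * t) = 1 := by rw [← exp_add]; simp
  have hcongr : EqOn (fun x => laplaceCDF ε (x - t) * laplacePDF ε x)
      (fun x => ε / 2 * exp (-ε * x) - ε / 4 * exp (ε * t) * exp (-(2 * ε) * x)) (Ioi t) :=
    fun x (hx : t < x) => by
    dsimp only
    rw [laplaceCDF, if_neg (by linarith), laplacePDF_of_nonneg (by linarith),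
      show -(2 * ε) * x = -ε * (x - t) + -ε * x + -ε * t by ring, exp_add, exp_add]
    linear_combination (ε / 4 * exp (-ε * (x - t)) * exp (-ε * x)) * hcancel
  rw [setIntegral_congr_fun measurableSet_Ioi hcongr,
    integral_sub ((integrableOn_exp_mul_Ioi (neg_lt_zero.2 hε) t).const_mul _)
      ((integrableOn_exp_mul_Ioi (by linarith) t).const_mul _),
    integral_const_mul, integral_const_mul, integral_exp_mul_Ioi (neg_lt_zero.2 hε),
    integral_exp_mul_Ioi (by linarith), show -(2 * ε) * t = -ε * t + -ε * t by ring, exp_add]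
  field_simp
  rw [← exp_add, neg_add_cancel, exp_zero]
  norm_num

lemma integral_laplaceCDF_sub_mul_laplacePDF (hε : 0 < ε) {t : ℝ} (ht : 0 ≤ t) :
    ∫ x, laplaceCDF ε (x - t) * laplacePDF ε x = laplaceDiffTail ε t := by
  have hint := integrable_laplaceCDF_mul_laplacePDF hε t
  rw [← integral_add_compl measurableSet_Iic hint, compl_Iic, ← Ioc_union_Ioi_eq_Ioi ht,
    setIntegral_union (Ioc_disjoint_Ioi le_rfl) measurableSet_Ioi hint.integrableOn
      hint.integrableOn, integral_Iic_zero_laplaceCDF_sub_mul_laplacePDF hε ht,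
    integral_Ioc_laplaceCDF_sub_mul_laplacePDF ht, integral_Ioi_laplaceCDF_sub_mul_laplacePDF hε ht,
    laplaceDiffTail]
  ring

lemma prod_le_sub_eq_lintegral (μ ν : Measure ℝ) [SFinite ν] (t : ℝ) :
    μ.prod ν {p | t ≤ p.1 - p.2} = ∫⁻ x, ν (Iic (x - t)) ∂μ := by
  have hs : MeasurableSet {p : ℝ × ℝ | t ≤ p.1 - p.2} :=
    measurableSet_le (by fun_prop) (by fun_prop)
  rw [Measure.prod_apply hs]
  refine lintegral_congr fun x => congrArg ν (ext fun y => ?_)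
  exact (le_sub_comm : t ≤ x - y ↔ y ≤ x - t)

lemma prod_lt_sub_eq_lintegral (μ ν : Measure ℝ) [SFinite ν] (t : ℝ) :
    μ.prod ν {p | t < p.1 - p.2} = ∫⁻ x, ν (Iio (x - t)) ∂μ := by
  have hs : MeasurableSet {p : ℝ × ℝ | t < p.1 - p.2} :=
    measurableSet_lt (by fun_prop) (by fun_prop)
  rw [Measure.prod_apply hs]
  refine lintegral_congr fun x => congrArg ν (ext fun y => ?_)
  exact (lt_sub_comm : t < x - y ↔ y < x - t)

instance (ε : ℝ) : SFinite (laplaceMeasure ε) := by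
  rw [laplaceMeasure]; infer_instance

lemma laplaceMeasure_prod_le_sub (hε : 0 < ε) {t : ℝ} (ht : 0 ≤ t) :
    (laplaceMeasure ε).prod (laplaceMeasure ε) {p | t ≤ p.1 - p.2} =
      ENNReal.ofReal (laplaceDiffTail ε t) := by
  rw [prod_le_sub_eq_lintegral, ← integral_laplaceCDF_sub_mul_laplacePDF hε ht,
    ofReal_integral_eq_lintegral_ofReal (integrable_laplaceCDF_mul_laplacePDF hε t)
      (ae_of_all _ fun x => mul_nonneg (laplaceCDF_mem_Icc hε _).1 (laplacePDF_nonneg hε.le x))]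
  have hF : Measurable fun x => ENNReal.ofReal (laplaceCDF ε (x - t)) :=
    (measurable_laplaceCDF.comp (measurable_sub_const t)).ennreal_ofReal
  simp_rw [laplaceMeasure_Iic hε]
  rw [laplaceMeasure,
    lintegral_withDensity_eq_lintegral_mul _ measurable_laplacePDF.ennreal_ofReal hF]
  congr with x
  rw [Pi.mul_apply, mul_comm, ENNReal.ofReal_mul (laplaceCDF_mem_Icc hε _).1]

lemma laplaceMeasure_prod_lt_sub (hε : 0 < ε) {t : ℝ} (ht : 0 ≤ t) :
    (laplaceMeasure ε).prod (laplaceMeasure ε) {p | t < p.1 - p.2} =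
      ENNReal.ofReal (laplaceDiffTail ε t) := by
  simp_rw [← laplaceMeasure_prod_le_sub hε ht, prod_lt_sub_eq_lintegral, prod_le_sub_eq_lintegral,
    measure_congr (Iio_ae_eq_Iic' (laplaceMeasure_singleton _))]

lemma cellMisclassification_eq (a b x y : ℝ) :
    cellMisclassification a b x y = a + (b - a) * if b - a ≤ x - y then 1 else 0 := by
  unfold cellMisclassification
  split_ifs <;> linarith

section

variable {Ω : Type*} {X Y : Ω → ℝ}

lemma cellMisclassification_comp_eq (a b : ℝ) :
    (fun ω => cellMisclassification a b (X ω) (Y ω)) =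
      fun ω => a + (b - a) * {ω | b - a ≤ X ω - Y ω}.indicator 1 ω := by
  ext ω
  simp only [cellMisclassification_eq, indicator_apply, Pi.one_apply]
  rfl

variable [MeasurableSpace Ω] {P : Measure Ω}

lemma measureReal_le_sub_of_map_eq (hε : 0 < ε) (hX : Measurable X) (hY : Measurable Y)
    (hlaw : P.map (fun ω => (X ω, Y ω)) = (laplaceMeasure ε).prod (laplaceMeasure ε))
    {t : ℝ} (ht : 0 ≤ t) :
    P.real {ω | t ≤ X ω - Y ω} = laplaceDiffTail ε t := by
  have hs : MeasurableSet {p : ℝ × ℝ | t ≤ p.1 - p.2} :=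
    measurableSet_le (by fun_prop) (by fun_prop)
  rw [measureReal_def, show {ω | t ≤ X ω - Y ω} = (fun ω => (X ω, Y ω)) ⁻¹' {p | t ≤ p.1 - p.2}
    from rfl, ← Measure.map_apply (hX.prodMk hY) hs, hlaw, laplaceMeasure_prod_le_sub hε ht,
    ENNReal.toReal_ofReal (laplaceDiffTail_nonneg hε.le ht)]

lemma measureReal_lt_sub_of_map_eq (hε : 0 < ε) (hX : Measurable X) (hY : Measurable Y)
    (hlaw : P.map (fun ω => (X ω, Y ω)) = (laplaceMeasure ε).prod (laplaceMeasure ε))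
    {t : ℝ} (ht : 0 ≤ t) :
    P.real {ω | t < X ω - Y ω} = laplaceDiffTail ε t := by
  have hs : MeasurableSet {p : ℝ × ℝ | t < p.1 - p.2} :=
    measurableSet_lt (by fun_prop) (by fun_prop)
  rw [measureReal_def, show {ω | t < X ω - Y ω} = (fun ω => (X ω, Y ω)) ⁻¹' {p | t < p.1 - p.2}
    from rfl, ← Measure.map_apply (hX.prodMk hY) hs, hlaw, laplaceMeasure_prod_lt_sub hε ht,
    ENNReal.toReal_ofReal (laplaceDiffTail_nonneg hε.le ht)]

variable [IsProbabilityMeasure P]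

lemma map_prodMk_eq_laplaceMeasure_prod (hX : Measurable X) (hY : Measurable Y)
    (hXY : IndepFun X Y P) (hXlaw : P.map X = laplaceMeasure ε)
    (hYlaw : P.map Y = laplaceMeasure ε) :
    P.map (fun ω => (X ω, Y ω)) = (laplaceMeasure ε).prod (laplaceMeasure ε) := by
  rw [(indepFun_iff_map_prod_eq_prod_map_map hX.aemeasurable hY.aemeasurable).1 hXY, hXlaw, hYlaw]

lemma integrable_cellMisclassification (hX : Measurable X) (hY : Measurable Y) (a b : ℝ) :
    Integrable (fun ω => cellMisclassification a b (X ω) (Y ω)) P := by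
  rw [cellMisclassification_comp_eq]
  exact (integrable_const a).add (((integrable_const 1).indicator
    (measurableSet_le measurable_const (hX.sub hY))).const_mul _)

lemma integral_cellMisclassification_eq (hX : Measurable X) (hY : Measurable Y) (a b : ℝ) :
    ∫ ω, cellMisclassification a b (X ω) (Y ω) ∂P =
      a + (b - a) * P.real {ω | b - a ≤ X ω - Y ω} := by
  have hA : MeasurableSet {ω | b - a ≤ X ω - Y ω} := measurableSet_le measurable_const (hX.sub hY)
  have hind : Integrable ({ω | b - a ≤ X ω - Y ω}.indicator 1) P :=
    (integrable_const (1 : ℝ)).indicator hA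
  rw [cellMisclassification_comp_eq, integral_add (integrable_const a) (hind.const_mul _),
    integral_const_mul, integral_indicator_one hA, integral_const, probReal_univ, one_smul]

lemma integral_cellMisclassification (hε : 0 < ε) (hX : Measurable X) (hY : Measurable Y)
    (hXY : IndepFun X Y P) (hXlaw : P.map X = laplaceMeasure ε)
    (hYlaw : P.map Y = laplaceMeasure ε) (a b : ℝ) :
    ∫ ω, cellMisclassification a b (X ω) (Y ω) ∂P =
      min a b * (1 - laplaceDiffTail ε |a - b|) + max a b * laplaceDiffTail ε |a - b| := by
  rw [integral_cellMisclassification_eq hX hY]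
  rcases le_total a b with hab | hba
  · rw [measureReal_le_sub_of_map_eq hε hX hY
      (map_prodMk_eq_laplaceMeasure_prod hX hY hXY hXlaw hYlaw) (sub_nonneg.2 hab), abs_sub_comm,
      abs_of_nonneg (sub_nonneg.2 hab), min_eq_left hab, max_eq_right hab]
    ring
  · have hcompl : {ω | b - a ≤ X ω - Y ω} = {ω | a - b < Y ω - X ω}ᶜ := by
      ext ω
      show b - a ≤ X ω - Y ω ↔ ¬a - b < Y ω - X ω
      rw [not_lt]
      constructor <;> intro <;> linarith
    have hB : MeasurableSet {ω | a - b < Y ω - X ω} := measurableSet_lt measurable_const (hY.sub hX)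
    rw [hcompl, probReal_compl_eq_one_sub hB, measureReal_lt_sub_of_map_eq hε hY hX
        (map_prodMk_eq_laplaceMeasure_prod hY hX hXY.symm hYlaw hXlaw) (sub_nonneg.2 hba),
      abs_of_nonneg (sub_nonneg.2 hba), min_eq_right hba, max_eq_left hba]
    ring

end

end

theorem expected_grid_misclassification_general {Ω : Type*} [MeasurableSpace Ω]
    (P : Measure Ω) [IsProbabilityMeasure P]
    (ε : ℝ) (hε : 0 < ε)
    {C : Type*} [Fintype C]
    (a b : C → ℝ)
    (Z : C × Fin 2 → Ω → ℝ)
    (hZ : ∀ p, Measurable (Z p))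
    (hindep : iIndepFun Z P)
    (hlaw : ∀ p, Measure.map (Z p) P =
      volume.withDensity (fun z => ENNReal.ofReal (ε / 2 * Real.exp (-ε * |z|)))) :
    ∫ ω, (∑ c : C,
        (b c * (if a c + Z (c, 0) ω ≥ b c + Z (c, 1) ω then (1 : ℝ) else 0)
          + a c * (if a c + Z (c, 0) ω < b c + Z (c, 1) ω then (1 : ℝ) else 0))) ∂P =
      ∑ c : C,
        (min (a c) (b c) *
            (1 - Real.exp (-ε * |a c - b c|) / 2 * (1 + ε * |a c - b c| / 2))
          + max (a c) (b c) *
            (Real.exp (-ε * |a c - b c|) / 2 * (1 + ε * |a c - b c| / 2))) := by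
  have hpair : ∀ c, IndepFun (Z (c, 0)) (Z (c, 1)) P := fun c => hindep.indepFun (by simp)
  exact (integral_finsetSum _ fun c _ =>
    integrable_cellMisclassification (hZ (c, 0)) (hZ (c, 1)) (a c) (b c)).trans <|
    Finset.sum_congr rfl fun c _ => integral_cellMisclassification hε (hZ _) (hZ _)
      (hpair c) (hlaw _) (hlaw _) (a c) (b c)

/-- Expected total misclassification count of the noisy histogram classifier over a
nonempty finite set of cells `C`, where cell `c` has `a c` positive and `b c` negative
instances, and `Z (c, 0)`, `Z (c, 1)` are the mutually independent Laplace(0, 1/ε)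
noises added to the positive and negative counts of cell `c`. -/
theorem expected_grid_misclassification {Ω : Type*} [MeasurableSpace Ω]
    (P : Measure Ω) [IsProbabilityMeasure P]
    (ε : ℝ) (hε : 0 < ε)
    {C : Type*} [Fintype C] [Nonempty C]
    (a b : C → ℝ) (ha : ∀ c, 0 ≤ a c) (hb : ∀ c, 0 ≤ b c)
    (Z : C × Fin 2 → Ω → ℝ)
    (hZ : ∀ p, Measurable (Z p))
    (hindep : iIndepFun Z P)
    (hlaw : ∀ p, Measure.map (Z p) P =
      volume.withDensity (fun z => ENNReal.ofReal (ε / 2 * Real.exp (-ε * |z|)))) :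
    ∫ ω, (∑ c : C,
        (b c * (if a c + Z (c, 0) ω ≥ b c + Z (c, 1) ω then (1 : ℝ) else 0)
          + a c * (if a c + Z (c, 0) ω < b c + Z (c, 1) ω then (1 : ℝ) else 0))) ∂P =
      ∑ c : C,
        (min (a c) (b c) *
            (1 - Real.exp (-ε * |a c - b c|) / 2 * (1 + ε * |a c - b c| / 2))
          + max (a c) (b c) *
            (Real.exp (-ε * |a c - b c|) / 2 * (1 + ε * |a c - b c| / 2))) :=
  expected_grid_misclassification_general P ε hε a b Z hZ hindep hlaw
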